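/- Define h : (0,∞) → ℝ by h(x) = (log x)² for 0 < x < e and h(x) = 2x/e − 1 for x ≥ e. Then h is convex on (0,∞) and (log x)² ≤ h(x) for all x > 0. -/

import Mathlib

/-!
On `(0, e]` the derivative `2 log x / x` of `(log x)²` increases up to `2/e`, which is the slope
of the affine piece, and the two pieces agree to first order at `e`; so `h` is differentiable with
monotone derivative, hence convex. For domination on `[e, ∞)` write `x = e^{1+s}` with `s ≥ 0`:
then `2x/e − 1 = 2e^s − 1 ≥ 1 + 2s + s² = (log x)²`.
-/

/-- The smallest convex function dominating `x ↦ (log x)²` on `(0, ∞)`: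
`h(x) = (log x)²` for `x < e` and `h(x) = 2x/e − 1` for `x ≥ e`. -/
noncomputable def hfun (x : ℝ) : ℝ :=
  if x < Real.exp 1 then (Real.log x) ^ 2 else 2 * x / Real.exp 1 - 1

open Set Real

theorem hasDerivAt_ite_lt {f g f' g' : ℝ → ℝ} {c x : ℝ}
    (hfg : f c = g c) (hfg' : f' c = g' c)
    (hf : x ≤ c → HasDerivAt f (f' x) x) (hg : c ≤ x → HasDerivAt g (g' x) x) :
    HasDerivAt (fun y ↦ if y < c then f y else g y) (if x < c then f' x else g' x) x := by
  rcases lt_trichotomy x c with hxc | rfl | hcx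
  · rw [if_pos hxc]
    refine (hf hxc.le).congr_of_eventuallyEq ?_
    filter_upwards [Iio_mem_nhds hxc] with y hy using if_pos hy
  · rw [if_neg (lt_irrefl x)]
    have hleft : HasDerivWithinAt (fun y ↦ if y < x then f y else g y) (g' x) (Iic x) x := by
      refine (hfg' ▸ (hf le_rfl).hasDerivWithinAt).congr (fun y hy ↦ ?_) (by simp [hfg])
      rcases (mem_Iic.mp hy).lt_or_eq with hyx | rfl
      · exact if_pos hyx
      · simp [hfg]
    have hright : HasDerivWithinAt (fun y ↦ if y < x then f y else g y) (g' x) (Ici x) x :=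
      (hg le_rfl).hasDerivWithinAt.congr (fun y hy ↦ if_neg (not_lt.mpr hy)) (by simp)
    simpa [Iic_union_Ici] using hleft.union hright
  · rw [if_neg hcx.not_gt]
    refine (hg hcx.le).congr_of_eventuallyEq ?_
    filter_upwards [Ioi_mem_nhds hcx] with y hy using if_neg (not_lt.mpr (mem_Ioi.mp hy).le)

theorem Real.log_div_self_monotoneOn : MonotoneOn (fun x : ℝ ↦ log x / x) (Ioc 0 (exp 1)) := by
  rintro x ⟨x_pos, -⟩ y ⟨y_pos, hye⟩ hxy
  have hlogy : log y ≤ 1 := by rwa [log_le_iff_le_exp y_pos]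
  have hlog_div : log x - log y ≤ x / y - 1 := by
    rw [← log_div x_pos.ne' y_pos.ne']
    exact log_le_sub_one_of_pos (div_pos x_pos y_pos)
  rw [div_le_div_iff₀ x_pos y_pos]
  calc log x * y ≤ (log y + (x / y - 1)) * y := by gcongr; linarith
    _ = log y * y + (x - y) := by field_simp
    _ ≤ log y * x := by nlinarith

theorem Real.hasDerivAt_log_sq {x : ℝ} (hx : x ≠ 0) :
    HasDerivAt (fun y ↦ log y ^ 2) (2 * log x / x) x := by
  simpa [div_eq_mul_inv, mul_comm] using (hasDerivAt_log hx).fun_pow 2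

noncomputable def hfunDeriv (x : ℝ) : ℝ :=
  if x < exp 1 then 2 * log x / x else 2 / exp 1

theorem hasDerivAt_hfun {x : ℝ} (hx : 0 < x) : HasDerivAt hfun (hfunDeriv x) x := by
  have hline : HasDerivAt (fun y ↦ 2 * y / exp 1 - 1) (2 / exp 1) x := by
    simpa using (((hasDerivAt_id x).const_mul 2).div_const (exp 1)).sub_const 1
  exact hasDerivAt_ite_lt (f' := fun y ↦ 2 * log y / y) (g' := fun _ ↦ 2 / exp 1)
    (by field_simp [log_exp]; norm_num) (by simp [log_exp])
    (fun _ ↦ hasDerivAt_log_sq hx.ne') (fun _ ↦ hline)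

theorem monotoneOn_hfunDeriv : MonotoneOn hfunDeriv (Ioi 0) := by
  rw [← Ioc_union_Ici_eq_Ioi (exp_pos 1)]
  refine MonotoneOn.union_right (c := exp 1) ?_
    (monotoneOn_const.congr fun y hy ↦ (if_neg (not_lt.mpr hy)).symm)
    ⟨⟨exp_pos 1, le_rfl⟩, fun _ h ↦ h.2⟩ ⟨self_mem_Ici, fun _ h ↦ h⟩
  have htwice := (monotone_mul_left_of_nonneg zero_le_two).comp_monotoneOn log_div_self_monotoneOn
  refine htwice.congr fun y hy ↦ ?_
  rcases hy.2.lt_or_eq with hye | rfl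
  · simp [hfunDeriv, hye, mul_div_assoc]
  · simp [hfunDeriv, log_exp, div_eq_mul_inv]

theorem convexOn_hfun : ConvexOn ℝ (Ioi 0) hfun := by
  refine MonotoneOn.convexOn_of_deriv (convex_Ioi 0)
    (fun x hx ↦ (hasDerivAt_hfun hx).continuousAt.continuousWithinAt)
    (fun x hx ↦ (hasDerivAt_hfun (interior_subset hx)).differentiableAt.differentiableWithinAt) ?_
  rw [interior_Ioi]
  exact monotoneOn_hfunDeriv.congr fun x hx ↦ (hasDerivAt_hfun hx).deriv.symm

theorem sq_log_le_hfun {x : ℝ} (hx : 0 < x) : log x ^ 2 ≤ hfun x := by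
  unfold hfun
  split_ifs with hxe
  · exact le_rfl
  obtain ⟨s, hs, rfl⟩ : ∃ s : ℝ, 0 ≤ s ∧ exp (1 + s) = x :=
    ⟨log x - 1, by rw [sub_nonneg, ← log_exp 1]; exact log_le_log (exp_pos 1) (not_lt.mp hxe),
      by rw [add_sub_cancel, exp_log hx]⟩
  have hdiv : exp (1 + s) / exp 1 = exp s := by
    rw [exp_add, mul_div_cancel_left₀ _ (exp_pos 1).ne']
  rw [log_exp, mul_div_assoc, hdiv]
  nlinarith [quadratic_le_exp_of_nonneg hs]

theorem statement12 :
    ConvexOn ℝ (Set.Ioi (0:ℝ)) hfun ∧ ∀ x : ℝ, 0 < x → (Real.log x) ^ 2 ≤ hfun x :=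
  ⟨convexOn_hfun, fun _ ↦ sq_log_le_hfun⟩
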